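/- Assume {1,…,N} is spanning. Let Φ := min{ Σᵢ |βᵢ| : β ∈ ℝ^N, Σᵢ βᵢ·cᵢ = e₁ } (the minimum over all linear representations of e₁ by the signal vectors; it is attained). Then the infimum of V*(λ) over λ ∈ Δ equals Φ², and moreover Φ equals the minimum of φ(S) over all minimally spanning subsets S of {1,…,N}. -/

import Mathlib

/-!
Let `Φ` be the least `ℓ¹` norm of a representation `e₁ = ∑ βᵢ cᵢ`. For positive definite `M`,
`(M⁻¹)₁₁ = max_w (2 w₁ - wᵀ M w)`. For the frequencies `λᵢ = |βᵢ| / Φ` of an optimal `β`,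
AM-GM bounds each term `2 βᵢ (cᵢ ⬝ w) - λᵢ (cᵢ ⬝ w)²` by `|βᵢ| Φ`, so `V*(λ) ≤ Φ²`. Conversely,
separating `e₁` from the image of the `ℓ¹` ball of radius `t < Φ` gives a dual vector `u` with
`|cᵢ ⬝ u| ≤ 1` and `u₁ ≥ t`, and testing with `w = u₁ u` shows `V*(λ) ≥ u₁²` on the whole simplex.
Finally, an optimal `β` of minimal support has linearly independent support: moving along a
dependency `δ` without changing the signs of `β` keeps the `ℓ¹` norm affine, hence optimal, until a
coordinate vanishes. Its support is then minimally spanning with `φ = Φ`.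
-/

open Matrix Finset Filter Topology

noncomputable section

namespace LearningTraps

variable {K N : ℕ}

/-- The information matrix `Σᵢ qᵢ · cᵢ cᵢᵀ`. -/
def infoMat (c : Fin N → Fin K → ℝ) (q : Fin N → ℝ) : Matrix (Fin K) (Fin K) ℝ :=
  ∑ i, q i • Matrix.vecMulVec (c i) (c i)

/-- Posterior variance `V_Σ(q) = [(Σ⁻¹ + Σᵢ qᵢ cᵢcᵢᵀ)⁻¹]₁₁`. -/
def postVar (hK : 0 < K) (c : Fin N → Fin K → ℝ)
    (Cov : Matrix (Fin K) (Fin K) ℝ) (q : Fin N → ℝ) : ℝ :=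
  (Cov⁻¹ + infoMat c q)⁻¹ ⟨0, hK⟩ ⟨0, hK⟩

/-- Posterior variance at integer signal counts. -/
def pv (hK : 0 < K) (c : Fin N → Fin K → ℝ)
    (Cov : Matrix (Fin K) (Fin K) ℝ) (q : Fin N → ℕ) : ℝ :=
  postVar hK c Cov fun i => (q i : ℝ)

/-- First standard basis vector of `ℝ^K`. -/
def e1 (hK : 0 < K) : Fin K → ℝ := Pi.single ⟨0, hK⟩ 1

/-- `S` is spanning: `e₁` lies in the span of `{cᵢ : i ∈ S}`. -/
def Spanning (hK : 0 < K) (c : Fin N → Fin K → ℝ) (S : Finset (Fin N)) : Prop :=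
  e1 hK ∈ Submodule.span ℝ (c '' ↑S)

/-- `S` is minimally spanning. -/
def MinSpanning (hK : 0 < K) (c : Fin N → Fin K → ℝ) (S : Finset (Fin N)) : Prop :=
  Spanning hK c S ∧ ∀ T ⊂ S, ¬ Spanning hK c T

/-- `β` represents `e₁` using only signals in `S`. -/
def IsRep (hK : 0 < K) (c : Fin N → Fin K → ℝ) (S : Finset (Fin N)) (β : Fin N → ℝ) : Prop :=
  (∀ i ∉ S, β i = 0) ∧ ∑ i, β i • c i = e1 hK

open Classical in
/-- The coefficients `β^S` (unique when `S` is minimally spanning). -/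
def betaVec (hK : 0 < K) (c : Fin N → Fin K → ℝ) (S : Finset (Fin N)) : Fin N → ℝ :=
  if h : ∃ β, IsRep hK c S β then h.choose else 0

/-- `φ(S) = Σ_{i∈S} |β^S_i|`. -/
def phi (hK : 0 < K) (c : Fin N → Fin K → ℝ) (S : Finset (Fin N)) : ℝ :=
  ∑ i, |betaVec hK c S i|

/-- The frequency vector `λ^S`. -/
def freq (hK : 0 < K) (c : Fin N → Fin K → ℝ) (S : Finset (Fin N)) : Fin N → ℝ :=
  fun i => |betaVec hK c S i| / phi hK c S

/-- The Unique Minimizer assumption: `Sstar` is the unique minimizer of `φ`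
among minimally spanning sets. -/
def UniqueMin (hK : 0 < K) (c : Fin N → Fin K → ℝ) (Sstar : Finset (Fin N)) : Prop :=
  MinSpanning hK c Sstar ∧
    ∀ S, MinSpanning hK c S → S ≠ Sstar → phi hK c Sstar < phi hK c S

/-- A `t`-optimal division of observations. -/
def TOptimal (hK : 0 < K) (c : Fin N → Fin K → ℝ) (Cov : Matrix (Fin K) (Fin K) ℝ)
    (t : ℕ) (q : Fin N → ℕ) : Prop :=
  (∑ i, q i) = t ∧ ∀ q' : Fin N → ℕ, (∑ i, q' i) = t → pv hK c Cov q ≤ pv hK c Cov q'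

/-- A greedy (myopic) acquisition sequence. -/
def Greedy (hK : 0 < K) (c : Fin N → Fin K → ℝ) (Cov : Matrix (Fin K) (Fin K) ℝ)
    (m : ℕ → Fin N → ℕ) : Prop :=
  m 0 = 0 ∧ ∀ t, ∃ i, m (t + 1) = m t + Pi.single i 1 ∧
    ∀ j, pv hK c Cov (m t + Pi.single i 1) ≤ pv hK c Cov (m t + Pi.single j 1)

open Classical in
/-- The set `A̅` of all signals whose coefficient vector lies in the span of `{cⱼ : j ∈ A}`. -/
def subClosure (c : Fin N → Fin K → ℝ) (A : Finset (Fin N)) : Finset (Fin N) :=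
  Finset.univ.filter fun i => c i ∈ Submodule.span ℝ (c '' ↑A)

/-- `S` is subspace-optimal: it uniquely minimizes `φ` among minimally spanning subsets
of its own subspace closure. -/
def SubspaceOptimal (hK : 0 < K) (c : Fin N → Fin K → ℝ) (S : Finset (Fin N)) : Prop :=
  MinSpanning hK c S ∧
    ∀ T ⊆ subClosure c S, MinSpanning hK c T → T ≠ S → phi hK c S < phi hK c T

/-- The asymptotic posterior variance `V*`, valued in `[0,∞]`. -/
def Vstar (hK : 0 < K) (c : Fin N → Fin K → ℝ) (l : Fin N → ℝ) : ENNReal :=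
  ⨆ (ε : ℝ) (_ : 0 < ε),
    ENNReal.ofReal ((infoMat c l + ε • (1 : Matrix (Fin K) (Fin K) ℝ))⁻¹ ⟨0, hK⟩ ⟨0, hK⟩)

end LearningTraps

theorem Matrix.PosDef.isGreatest_inv_apply {n : Type*} [Fintype n] [DecidableEq n]
    {M : Matrix n n ℝ} (hM : M.PosDef) (k : n) :
    IsGreatest (Set.range fun w : n → ℝ => 2 * w k - w ⬝ᵥ (M *ᵥ w)) (M⁻¹ k k) := by
  set v := M⁻¹ *ᵥ Pi.single k 1
  have hMv : M *ᵥ v = Pi.single k 1 := by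
    rw [mulVec_mulVec, mul_nonsing_inv _ ((isUnit_iff_isUnit_det M).1 hM.isUnit), one_mulVec]
  have hvk : v k = M⁻¹ k k := by simp [v, mulVec_single]
  have hform : ∀ w, w ⬝ᵥ (M *ᵥ v) = w k := by simp [hMv, dotProduct_single]
  refine ⟨⟨v, by simp only [hform, hvk]; ring⟩, ?_⟩
  rintro _ ⟨w, rfl⟩
  have hsymm : v ⬝ᵥ (M *ᵥ w) = w ⬝ᵥ (M *ᵥ v) := by
    have hT : Mᵀ = M := by simpa [conjTranspose_eq_transpose_of_trivial] using hM.isHermitian.eq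
    rw [dotProduct_mulVec, ← mulVec_transpose, hT, dotProduct_comm]
  have := hM.posSemidef.dotProduct_mulVec_nonneg (w - v)
  rw [star_trivial, mulVec_sub, dotProduct_sub, sub_dotProduct, sub_dotProduct, hsymm, hform,
    hform, hvk] at this
  dsimp only
  linarith

section Representations

variable {ι E : Type*} [Fintype ι] [NormedAddCommGroup E] [NormedSpace ℝ E] (c : ι → E)

lemma PiLp.norm_toLp_eq_sum_abs (β : ι → ℝ) : ‖WithLp.toLp 1 β‖ = ∑ i, |β i| := by
  simp [PiLp.norm_eq_of_L1]

theorem exists_isMinOn_l1_repr {b : E} (hb : ∃ β : ι → ℝ, ∑ i, β i • c i = b) :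
    ∃ β ∈ {β : ι → ℝ | ∑ i, β i • c i = b},
      IsMinOn (fun β : ι → ℝ => ∑ i, |β i|) {β | ∑ i, β i • c i = b} β := by
  obtain ⟨β₀, hβ₀⟩ := hb
  set s : Set (PiLp 1 fun _ : ι => ℝ) := {x | ∑ i, x i • c i = b}
  have hs : IsClosed s := isClosed_eq (by fun_prop) continuous_const
  obtain ⟨β, hβ, hdist⟩ := hs.exists_infDist_eq_dist ⟨WithLp.toLp 1 β₀, hβ₀⟩ 0
  refine ⟨β.ofLp, hβ, isMinOn_iff.2 fun γ (hγ : _ = b) => ?_⟩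
  have := Metric.infDist_le_dist_of_mem (x := 0) (show WithLp.toLp 1 γ ∈ s from hγ)
  rwa [hdist, dist_zero_left, dist_zero_left, ← WithLp.toLp_ofLp 1 β,
    PiLp.norm_toLp_eq_sum_abs, PiLp.norm_toLp_eq_sum_abs] at this

theorem exists_dual_of_lt_l1_norm {b : E} {t : ℝ} (ht : 0 < t)
    (h : ∀ β : ι → ℝ, ∑ i, β i • c i = b → t < ∑ i, |β i|) :
    ∃ f : StrongDual ℝ E, (∀ i, |f (c i)| ≤ 1) ∧ t ≤ f b := by
  classical
  let L : (PiLp 1 fun _ : ι => ℝ) →ₗ[ℝ] E :=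
    (Fintype.linearCombination ℝ c).comp (WithLp.linearEquiv 1 ℝ (ι → ℝ)).toLinearMap
  have hL : ∀ x, L x = ∑ i, x i • c i := fun x => by simp [L, Fintype.linearCombination_apply]
  set s := L '' Metric.closedBall 0 t
  have hs : IsCompact s := (isCompact_closedBall 0 t).image L.continuous_of_finiteDimensional
  have hbs : b ∉ s := by
    rintro ⟨x, hx, rfl⟩
    rw [mem_closedBall_zero_iff, PiLp.norm_eq_of_L1] at hx
    exact (h x (hL x).symm).not_ge (by simpa using hx)
  obtain ⟨f, r, hfs, hfb⟩ :=
    geometric_hahn_banach_closed_point ((convex_closedBall 0 t).linear_image L) hs.isClosed hbs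
  have hr : 0 < r := by simpa using hfs 0 ⟨0, by simp [ht.le]⟩
  -- the vertices `± t eᵢ` of the ℓ¹ ball
  have hvert : ∀ i, ∀ σ : ℝ, |σ| = 1 → f ((σ * t) • c i) < r := by
    intro i σ hσ
    have : (σ * t) • c i ∈ s := ⟨WithLp.toLp 1 (Pi.single i (σ * t)), by
      rw [mem_closedBall_zero_iff, PiLp.norm_toLp_eq_sum_abs,
        sum_eq_single i (fun j _ hj => by simp [hj]) (by simp)]
      simp [abs_mul, hσ, abs_of_pos ht], by
      rw [hL, sum_eq_single i (fun j _ hj => by simp [hj]) (by simp)]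
      simp⟩
    exact hfs _ this
  refine ⟨(t / r) • f, fun i => ?_, ?_⟩
  · have hpos := hvert i 1 (by simp)
    have hneg := hvert i (-1) (by simp)
    simp only [map_smul, smul_eq_mul, one_mul, neg_mul] at hpos hneg
    have : |t * f (c i)| ≤ r := abs_le.2 ⟨by linarith, hpos.le⟩
    rw [_root_.smul_apply, smul_eq_mul, div_mul_eq_mul_div, abs_div, abs_of_pos hr]
    exact div_le_one_of_le₀ this hr.le
  · rw [_root_.smul_apply, smul_eq_mul, div_mul_eq_mul_div, le_div_iff₀ hr]
    exact mul_le_mul_of_nonneg_left hfb.le ht.le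

theorem exists_isMinOn_l1_repr_support_ssubset {b : E} {β : ι → ℝ} (hβ : ∑ i, β i • c i = b)
    (hmin : IsMinOn (fun β : ι → ℝ => ∑ i, |β i|) {β | ∑ i, β i • c i = b} β)
    {δ : ι → ℝ} (hδ : δ ≠ 0) (hδβ : Function.support δ ⊆ Function.support β)
    (hδc : ∑ i, δ i • c i = 0) :
    ∃ β' : ι → ℝ, ∑ i, β' i • c i = b ∧
      IsMinOn (fun β : ι → ℝ => ∑ i, |β i|) {β | ∑ i, β i • c i = b} β' ∧
      Function.support β' ⊂ Function.support β := by
  classical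
  have hne : (univ.filter (δ · ≠ 0)).Nonempty := by
    obtain ⟨i, hi⟩ := Function.ne_iff.1 hδ
    exact ⟨i, mem_filter.2 ⟨mem_univ i, hi⟩⟩
  -- moving along `δ` until the first coordinate of `β` vanishes keeps all signs of `β`
  obtain ⟨i₀, hi₀, hi₀min⟩ := exists_min_image _ (fun i => |β i / δ i|) hne
  have hδi₀ : δ i₀ ≠ 0 := (mem_filter.1 hi₀).2
  set t := -(β i₀ / δ i₀)
  have hle : ∀ i, |t * δ i| ≤ |β i| := by
    intro i
    by_cases hδi : δ i = 0
    · simp [hδi]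
    · have := hi₀min i (mem_filter.2 ⟨mem_univ i, hδi⟩)
      rw [abs_mul, abs_neg, ← le_div_iff₀ (abs_pos.2 hδi), ← abs_div]
      exact this
  have hrep : ∀ s : ℝ, ∑ i, (β i + s * δ i) • c i = b := fun s => by
    simp only [add_smul, mul_smul, sum_add_distrib, ← smul_sum, hδc, smul_zero, add_zero, hβ]
  have hpair : ∑ i, |β i + t * δ i| + ∑ i, |β i + -t * δ i| = 2 * ∑ i, |β i| := by
    rw [← sum_add_distrib, mul_sum]
    refine sum_congr rfl fun i _ => ?_
    obtain ⟨h₁, h₂⟩ := abs_le.1 (hle i)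
    rw [neg_mul]
    rcases le_total 0 (β i) with hβi | hβi
    · rw [abs_of_nonneg hβi] at h₁ h₂ ⊢
      rw [abs_of_nonneg (by linarith), abs_of_nonneg (by linarith)]; ring
    · rw [abs_of_nonpos hβi] at h₁ h₂ ⊢
      rw [abs_of_nonpos (by linarith), abs_of_nonpos (by linarith)]; ring
  have heq : ∑ i, |β i + t * δ i| = ∑ i, |β i| := by
    have h₁ : ∑ i, |β i| ≤ ∑ i, |β i + t * δ i| := hmin (hrep t)
    have h₂ : ∑ i, |β i| ≤ ∑ i, |β i + -t * δ i| := hmin (hrep (-t))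
    linarith
  refine ⟨fun i => β i + t * δ i, hrep t, fun γ hγ => ?_, ?_⟩
  · exact heq.trans_le (hmin hγ)
  · refine (Set.ssubset_iff_of_subset fun i hi => ?_).2 ⟨i₀, hδβ hδi₀, ?_⟩
    · by_contra hβi
      have hδi : δ i = 0 := by_contra fun h => hβi (hδβ h)
      simp_all
    · simp [t, hδi₀]

theorem exists_isMinOn_l1_repr_linearIndependent {b : E} (hb : ∃ β : ι → ℝ, ∑ i, β i • c i = b) :
    ∃ β : ι → ℝ, ∑ i, β i • c i = b ∧
      IsMinOn (fun β : ι → ℝ => ∑ i, |β i|) {β | ∑ i, β i • c i = b} β ∧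
      ∀ δ : ι → ℝ, Function.support δ ⊆ Function.support β → ∑ i, δ i • c i = 0 → δ = 0 := by
  obtain ⟨β₀, hβ₀, hmin₀⟩ := exists_isMinOn_l1_repr c hb
  obtain ⟨β, ⟨hβ, hmin⟩, hsmallest⟩ := (InvImage.wf Function.support wellFounded_lt).has_min
    {β | ∑ i, β i • c i = b ∧ IsMinOn (fun β : ι → ℝ => ∑ i, |β i|) {β | ∑ i, β i • c i = b} β}
    ⟨β₀, hβ₀, hmin₀⟩
  refine ⟨β, hβ, hmin, fun δ hδβ hδc => by_contra fun hδ => ?_⟩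
  obtain ⟨β', hβ', hmin', hlt⟩ := exists_isMinOn_l1_repr_support_ssubset c hβ hmin hδ hδβ hδc
  exact hsmallest β' ⟨hβ', hmin'⟩ hlt

end Representations

namespace LearningTraps

variable {K N : ℕ}

lemma infoMat_mulVec (c : Fin N → Fin K → ℝ) (l : Fin N → ℝ) (x : Fin K → ℝ) :
    infoMat c l *ᵥ x = ∑ i, (l i * (c i ⬝ᵥ x)) • c i := by
  simp only [infoMat, sum_mulVec, smul_mulVec, vecMulVec_mulVec, op_smul_eq_smul, smul_smul]

lemma dotProduct_infoMat_mulVec (c : Fin N → Fin K → ℝ) (l : Fin N → ℝ) (x : Fin K → ℝ) :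
    x ⬝ᵥ (infoMat c l *ᵥ x) = ∑ i, l i * (c i ⬝ᵥ x) ^ 2 := by
  rw [infoMat_mulVec, dotProduct_comm, sum_dotProduct]
  exact Finset.sum_congr rfl fun i _ => by rw [smul_dotProduct, smul_eq_mul]; ring

lemma posSemidef_infoMat (c : Fin N → Fin K → ℝ) {l : Fin N → ℝ} (hl : ∀ i, 0 ≤ l i) :
    (infoMat c l).PosSemidef :=
  posSemidef_sum _ fun i _ => (posSemidef_vecMulVec_self_star (c i)).smul (hl i)

lemma posDef_infoMat_add_smul_one (c : Fin N → Fin K → ℝ) {l : Fin N → ℝ} (hl : ∀ i, 0 ≤ l i)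
    {ε : ℝ} (hε : 0 < ε) : (infoMat c l + ε • (1 : Matrix (Fin K) (Fin K) ℝ)).PosDef :=
  PosDef.posSemidef_add (posSemidef_infoMat c hl) (PosDef.one.smul hε)


lemma dotProduct_infoMat_add_smul_one_mulVec (c : Fin N → Fin K → ℝ) (l : Fin N → ℝ) (ε : ℝ)
    (x : Fin K → ℝ) :
    x ⬝ᵥ ((infoMat c l + ε • (1 : Matrix (Fin K) (Fin K) ℝ)) *ᵥ x)
      = ∑ i, l i * (c i ⬝ᵥ x) ^ 2 + ε * (x ⬝ᵥ x) := by
  rw [add_mulVec, dotProduct_add, dotProduct_infoMat_mulVec, smul_mulVec, one_mulVec,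
    dotProduct_smul, smul_eq_mul]

lemma e1_dotProduct (hK : 0 < K) (x : Fin K → ℝ) : e1 hK ⬝ᵥ x = x ⟨0, hK⟩ := by
  simp [e1, single_dotProduct]

theorem Vstar_le_sq_of_sum_smul_eq (hK : 0 < K) (c : Fin N → Fin K → ℝ) {β : Fin N → ℝ}
    (hβ : ∑ i, β i • c i = e1 hK) (hpos : 0 < ∑ i, |β i|) :
    Vstar hK c (fun i => |β i| / ∑ j, |β j|) ≤ ENNReal.ofReal ((∑ i, |β i|) ^ 2) := by
  set Φ := ∑ i, |β i|
  refine iSup₂_le fun ε hε => ENNReal.ofReal_le_ofReal ?_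
  obtain ⟨⟨w, hw⟩, -⟩ := (posDef_infoMat_add_smul_one c (fun i => by positivity) hε
    (l := fun i => |β i| / Φ)).isGreatest_inv_apply ⟨0, hK⟩
  have hw0 : w ⟨0, hK⟩ = ∑ i, β i * (c i ⬝ᵥ w) := by
    rw [← e1_dotProduct hK w, ← hβ, sum_dotProduct]
    simp only [smul_dotProduct, smul_eq_mul]
  -- `2 |β| |x| ≤ |β| (x² / Φ + Φ)`, i.e. AM-GM
  have hterm : ∀ i, 2 * (β i * (c i ⬝ᵥ w)) - |β i| / Φ * (c i ⬝ᵥ w) ^ 2 ≤ |β i| * Φ := by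
    intro i
    have h1 : 2 * (β i * (c i ⬝ᵥ w)) ≤ 2 * (|β i| * |c i ⬝ᵥ w|) := by
      rw [← abs_mul]; linarith [le_abs_self (β i * (c i ⬝ᵥ w))]
    have h2 : 0 ≤ |β i| / Φ * (|c i ⬝ᵥ w| - Φ) ^ 2 := by positivity
    have h3 : |β i| / Φ * (|c i ⬝ᵥ w| - Φ) ^ 2
        = |β i| / Φ * (c i ⬝ᵥ w) ^ 2 - 2 * (|β i| * |c i ⬝ᵥ w|) + |β i| * Φ := by
      rw [sub_sq, sq_abs]; field_simp
    linarith
  rw [← hw]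
  dsimp only
  rw [dotProduct_infoMat_add_smul_one_mulVec, hw0]
  calc 2 * ∑ i, β i * (c i ⬝ᵥ w) - (∑ i, |β i| / Φ * (c i ⬝ᵥ w) ^ 2 + ε * (w ⬝ᵥ w))
      ≤ ∑ i, (2 * (β i * (c i ⬝ᵥ w)) - |β i| / Φ * (c i ⬝ᵥ w) ^ 2) := by
        rw [sum_sub_distrib, mul_sum]
        linarith [mul_nonneg hε.le (by simpa using dotProduct_self_star_nonneg w : 0 ≤ w ⬝ᵥ w)]
    _ ≤ ∑ i, |β i| * Φ := sum_le_sum fun i _ => hterm i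
    _ = Φ ^ 2 := by rw [← sum_mul, sq]

theorem ofReal_sq_le_Vstar_of_abs_dotProduct_le_one (hK : 0 < K) (c : Fin N → Fin K → ℝ)
    {l : Fin N → ℝ} (hl : ∀ i, 0 ≤ l i) (hl1 : ∑ i, l i = 1) {u : Fin K → ℝ} (hu : ∀ i, |c i ⬝ᵥ u| ≤ 1) :
    ENNReal.ofReal (u ⟨0, hK⟩ ^ 2) ≤ Vstar hK c l := by
  set a := u ⟨0, hK⟩
  set C := a ^ 2 * (u ⬝ᵥ u)
  have hentry : ∀ ε > 0,
      a ^ 2 - ε * C ≤ (infoMat c l + ε • (1 : Matrix (Fin K) (Fin K) ℝ))⁻¹ ⟨0, hK⟩ ⟨0, hK⟩ := by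
    intro ε hε
    refine le_trans ?_ (((posDef_infoMat_add_smul_one c hl hε).isGreatest_inv_apply ⟨0, hK⟩).2
      ⟨a • u, rfl⟩)
    have hsum : ∑ i, l i * (c i ⬝ᵥ a • u) ^ 2 ≤ a ^ 2 := calc
      ∑ i, l i * (c i ⬝ᵥ a • u) ^ 2 ≤ ∑ i, l i * a ^ 2 := by
        refine sum_le_sum fun i _ => mul_le_mul_of_nonneg_left ?_ (hl i)
        rw [dotProduct_smul, smul_eq_mul, mul_pow]
        exact mul_le_of_le_one_right (sq_nonneg a) (sq_le_one_iff_abs_le_one _ |>.2 (hu i))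
      _ = a ^ 2 := by rw [← sum_mul, hl1, one_mul]
    dsimp only
    rw [dotProduct_infoMat_add_smul_one_mulVec]
    have hau : (a • u) ⬝ᵥ (a • u) = a ^ 2 * (u ⬝ᵥ u) := by
      simp only [dotProduct_smul, smul_dotProduct, smul_eq_mul]; ring
    rw [hau, Pi.smul_apply, smul_eq_mul]
    linarith
  have hlim : Tendsto (fun ε => ENNReal.ofReal (a ^ 2 - ε * C)) (𝓝[>] 0)
      (𝓝 (ENNReal.ofReal (a ^ 2))) := by
    refine (ENNReal.continuous_ofReal.tendsto _).comp (tendsto_nhdsWithin_of_tendsto_nhds ?_)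
    exact (continuous_const.sub (continuous_id.mul continuous_const)).tendsto' 0 _ (by simp)
  refine le_of_tendsto hlim (eventually_nhdsWithin_of_forall fun ε hε => ?_)
  exact (ENNReal.ofReal_le_ofReal (hentry ε hε)).trans (le_iSup₂ (f := fun (ε : ℝ) (_ : 0 < ε) =>
    ENNReal.ofReal ((infoMat c l + ε • (1 : Matrix (Fin K) (Fin K) ℝ))⁻¹ ⟨0, hK⟩ ⟨0, hK⟩)) ε hε)

lemma exists_isRep_of_spanning (hK : 0 < K) (c : Fin N → Fin K → ℝ) {S : Finset (Fin N)}
    (h : Spanning hK c S) : ∃ β, IsRep hK c S β := by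
  classical
  obtain ⟨l, hl, hrep⟩ := (Finsupp.mem_span_image_iff_linearCombination ℝ).1 h
  refine ⟨fun i => l i, fun i hi => ?_, ?_⟩
  · by_contra hne
    exact hi (by exact_mod_cast hl (Finsupp.mem_support_iff.2 hne))
  · rw [← hrep, Finsupp.linearCombination_apply,
      Finsupp.sum_fintype _ _ fun i => zero_smul ℝ (c i)]

lemma spanning_of_isRep (hK : 0 < K) (c : Fin N → Fin K → ℝ) {S : Finset (Fin N)}
    {β : Fin N → ℝ} (h : IsRep hK c S β) : Spanning hK c S := by
  rw [Spanning, ← h.2]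
  refine Submodule.sum_mem _ fun i _ => ?_
  by_cases hi : i ∈ S
  · exact Submodule.smul_mem _ _ (Submodule.subset_span ⟨i, hi, rfl⟩)
  · rw [h.1 i hi, zero_smul]
    exact Submodule.zero_mem _

lemma isRep_betaVec (hK : 0 < K) (c : Fin N → Fin K → ℝ) {S : Finset (Fin N)}
    (h : Spanning hK c S) : IsRep hK c S (betaVec hK c S) := by
  have hex := exists_isRep_of_spanning hK c h
  rw [betaVec, dif_pos hex]
  exact hex.choose_spec

open Classical in
theorem minSpanning_support_and_betaVec_eq (hK : 0 < K) (c : Fin N → Fin K → ℝ)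
    {β : Fin N → ℝ} (hβ : ∑ i, β i • c i = e1 hK)
    (hind : ∀ δ : Fin N → ℝ, Function.support δ ⊆ Function.support β →
      ∑ i, δ i • c i = 0 → δ = 0) :
    MinSpanning hK c (Function.support β).toFinset ∧
      betaVec hK c (Function.support β).toFinset = β := by
  set S := (Function.support β).toFinset
  have hβS : IsRep hK c S β := ⟨fun i hi => by simpa [S] using hi, hβ⟩
  have huniq : ∀ γ, IsRep hK c S γ → γ = β := by
    intro γ hγ
    refine (sub_eq_zero.1 (hind (γ - β) (fun i hi => ?_) ?_))
    · by_contra hβi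
      have hγi : γ i = 0 := hγ.1 i (by simpa [S] using hβi)
      simp_all
    · simp only [Pi.sub_apply, sub_smul, sum_sub_distrib, hγ.2, hβ, sub_self]
  refine ⟨⟨spanning_of_isRep hK c hβS, fun T hTS hT => ?_⟩,
    huniq _ (isRep_betaVec hK c (spanning_of_isRep hK c hβS))⟩
  obtain ⟨γ, hγT, hγ⟩ := exists_isRep_of_spanning hK c hT
  obtain ⟨i, hiS, hiT⟩ := exists_of_ssubset hTS
  have hγS : IsRep hK c S γ := ⟨fun j hj => hγT j fun hjT => hj (hTS.subset hjT), hγ⟩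
  have hβi : β i ≠ 0 := by simpa [S] using hiS
  exact hβi (huniq γ hγS ▸ hγT i hiT)

theorem ofReal_sq_le_Vstar_of_isMinOn (hK : 0 < K) (c : Fin N → Fin K → ℝ) {β : Fin N → ℝ}
    (hmin : IsMinOn (fun β : Fin N → ℝ => ∑ i, |β i|) {β | ∑ i, β i • c i = e1 hK} β)
    (hpos : 0 < ∑ i, |β i|) {l : Fin N → ℝ} (hl : ∀ i, 0 ≤ l i) (hl1 : ∑ i, l i = 1) :
    ENNReal.ofReal ((∑ i, |β i|) ^ 2) ≤ Vstar hK c l := by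
  set Φ := ∑ i, |β i|
  have hlim : Tendsto (fun t : ℝ => ENNReal.ofReal (t ^ 2)) (𝓝[<] Φ)
      (𝓝 (ENNReal.ofReal (Φ ^ 2))) :=
    ((ENNReal.continuous_ofReal.comp (continuous_pow 2)).tendsto Φ).mono_left nhdsWithin_le_nhds
  refine le_of_tendsto hlim (eventually_of_mem (Ioo_mem_nhdsLT hpos) ?_)
  rintro t ⟨ht, htΦ⟩
  obtain ⟨f, hf, hft⟩ := exists_dual_of_lt_l1_norm c ht fun γ hγ => htΦ.trans_le (hmin hγ)
  set u : Fin K → ℝ := fun j => f (Pi.single j 1)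
  have hu : ∀ x, f x = x ⬝ᵥ u := fun x => by
    simp only [dotProduct, u, ← smul_eq_mul, ← map_smul, ← map_sum, ← pi_eq_sum_univ' x]
  refine le_trans (ENNReal.ofReal_le_ofReal ?_)
    (ofReal_sq_le_Vstar_of_abs_dotProduct_le_one hK c hl hl1 fun i => by rw [← hu]; exact hf i)
  rw [← e1_dotProduct hK u, ← hu]
  exact pow_le_pow_left₀ ht.le hft 2

theorem Vstar_inf_eq_phi_min_general {K N : ℕ} (hK : 0 < K)
    (c : Fin N → Fin K → ℝ) (hspan : Spanning hK c Finset.univ) :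
    ∃ Φ : ℝ,
      (∃ β : Fin N → ℝ, (∑ i, β i • c i) = e1 hK ∧ (∑ i, |β i|) = Φ) ∧
      (∀ β : Fin N → ℝ, (∑ i, β i • c i) = e1 hK → Φ ≤ ∑ i, |β i|) ∧
      sInf (Vstar hK c '' {l : Fin N → ℝ | (∀ i, 0 ≤ l i) ∧ (∑ i, l i) = 1}) =
        ENNReal.ofReal (Φ ^ 2) ∧
      (∃ S : Finset (Fin N), MinSpanning hK c S ∧ phi hK c S = Φ) ∧
      (∀ S : Finset (Fin N), MinSpanning hK c S → Φ ≤ phi hK c S) := by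
  obtain ⟨β₀, -, hβ₀⟩ := exists_isRep_of_spanning hK c hspan
  obtain ⟨β, hβ, hmin, hind⟩ := exists_isMinOn_l1_repr_linearIndependent c ⟨β₀, hβ₀⟩
  set Φ := ∑ i, |β i|
  have hΦ : 0 < Φ := by
    obtain ⟨i, hi⟩ := Function.ne_iff.1 fun hβ0 : β = 0 => by
      simpa [hβ0, e1] using congrFun hβ ⟨0, hK⟩
    exact sum_pos' (fun j _ => abs_nonneg (β j)) ⟨i, mem_univ i, abs_pos.2 hi⟩
  obtain ⟨hS, hβS⟩ := minSpanning_support_and_betaVec_eq hK c hβ hind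
  have hfreq : (fun i => |β i| / Φ) ∈ {l : Fin N → ℝ | (∀ i, 0 ≤ l i) ∧ (∑ i, l i) = 1} :=
    ⟨fun i => by positivity, by rw [← sum_div, div_self hΦ.ne']⟩
  refine ⟨Φ, ⟨β, hβ, rfl⟩, fun γ hγ => hmin hγ, IsLeast.csInf_eq ⟨⟨_, hfreq, ?_⟩, ?_⟩,
    ⟨_, hS, by rw [phi, hβS]⟩, fun S hS => hmin (isRep_betaVec hK c hS.1).2⟩
  · exact (Vstar_le_sq_of_sum_smul_eq hK c hβ hΦ).antisymm
      (ofReal_sq_le_Vstar_of_isMinOn hK c hmin hΦ hfreq.1 hfreq.2)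
  · rintro _ ⟨l, ⟨hl, hl1⟩, rfl⟩
    exact ofReal_sq_le_Vstar_of_isMinOn hK c hmin hΦ hl hl1

/-- If `{1,…,N}` is spanning, the minimum `Φ` of `Σᵢ|βᵢ|` over all
representations `Σᵢ βᵢcᵢ = e₁` is attained; the infimum of `V*` over the simplex is `Φ²`;
and `Φ` is the minimum of `φ` over minimally spanning sets. -/
theorem Vstar_inf_eq_phi_min {K N : ℕ} (hK : 0 < K) (hN : 0 < N)
    (c : Fin N → Fin K → ℝ) (hspan : Spanning hK c Finset.univ) :
    ∃ Φ : ℝ,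
      (∃ β : Fin N → ℝ, (∑ i, β i • c i) = e1 hK ∧ (∑ i, |β i|) = Φ) ∧
      (∀ β : Fin N → ℝ, (∑ i, β i • c i) = e1 hK → Φ ≤ ∑ i, |β i|) ∧
      sInf (Vstar hK c '' {l : Fin N → ℝ | (∀ i, 0 ≤ l i) ∧ (∑ i, l i) = 1}) =
        ENNReal.ofReal (Φ ^ 2) ∧
      (∃ S : Finset (Fin N), MinSpanning hK c S ∧ phi hK c S = Φ) ∧
      (∀ S : Finset (Fin N), MinSpanning hK c S → Φ ≤ phi hK c S) :=
  Vstar_inf_eq_phi_min_general hK c hspan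

end LearningTraps
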